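/- arXiv:1601.00982 — 4 statements merged into one kernel-verified Lean document; each statement's English description precedes it below -/
import Mathlib

section
/- Let α > 1 be real and let a, b, c, d ≥ 0. Then F⁻(ac, bd) ≤ D_α(a,b) · D_α(c,d) and F⁺(ac, bd) ≤ D_α(a,b) · D_α(c,d), where for r, s ≥ 0 one sets F⁻(r,s) = (r^{α−1/2} − s^{α−1/2})/(r^{1/2} − s^{1/2}) when r ≠ s and F⁻(r,r) = (2α−1) r^{α−1}, and F⁺(r,s) = (r^{α−1/2} + s^{α−1/2})/(r^{1/2} + s^{1/2}) when r + s > 0 and F⁺(0,0) = 0. (This is the componentwise form of the operator inequalities Φ±_{ρ^A ⊗ ρ^B} ≤ Ψ for the corresponding Hadamard multiplier maps.) -/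
/-- The divided difference `D_α(a,b) = (a^α − b^α)/(a − b)` for `a ≠ b`,
with `D_α(a,a) = α a^{α−1}` (so `D_α(0,0) = 0` for `α > 1`). -/
noncomputable def divDiff (α a b : ℝ) : ℝ :=
  if a = b then α * a ^ (α - 1) else (a ^ α - b ^ α) / (a - b)

/-- `F⁻(r,s) = (r^{α−1/2} − s^{α−1/2})/(r^{1/2} − s^{1/2})` for `r ≠ s`,
with `F⁻(r,r) = (2α−1) r^{α−1}`. -/
noncomputable def Fminus (α r s : ℝ) : ℝ :=
  if r = s then (2 * α - 1) * r ^ (α - 1)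
  else (r ^ (α - 1 / 2) - s ^ (α - 1 / 2)) / (r ^ ((1 : ℝ) / 2) - s ^ ((1 : ℝ) / 2))

/-- `F⁺(r,s) = (r^{α−1/2} + s^{α−1/2})/(r^{1/2} + s^{1/2})` when `r + s > 0`,
with `F⁺(0,0) = 0`. -/
noncomputable def Fplus (α r s : ℝ) : ℝ :=
  if r = 0 ∧ s = 0 then 0
  else (r ^ (α - 1 / 2) + s ^ (α - 1 / 2)) / (r ^ ((1 : ℝ) / 2) + s ^ ((1 : ℝ) / 2))

open intervalIntegral in
lemma divDiff_eq_integral (β : ℝ) (hβ : 1 < β) (p q : ℝ) (hp : 0 ≤ p) (hq : 0 ≤ q) :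
    divDiff β p q = β * ∫ t in (0:ℝ)..1, ((p - q) * t + q) ^ (β - 1) := by
  have hβ0 : (0:ℝ) < β := by linarith
  rcases eq_or_ne p q with h | h
  · subst h
    simp [divDiff, sub_self, mul_comm]
  · rw [divDiff, if_neg h]
    have hpq : p - q ≠ 0 := sub_ne_zero.mpr h
    rw [intervalIntegral.integral_comp_mul_add (fun x => x ^ (β - 1)) hpq q]
    rw [integral_rpow (Or.inl (by linarith))]
    rw [sub_add_cancel]
    simp only [mul_zero, zero_add, mul_one, smul_eq_mul, sub_add_cancel]
    field_simp

lemma base_nonneg {p q t : ℝ} (hp : 0 ≤ p) (hq : 0 ≤ q) (ht : t ∈ Set.Icc (0:ℝ) 1) :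
    0 ≤ (p - q) * t + q := by
  obtain ⟨ht0, ht1⟩ := ht
  nlinarith [mul_nonneg ht0 hp, mul_nonneg (by linarith : (0:ℝ) ≤ 1 - t) hq]

lemma divDiff_nonneg (β : ℝ) (hβ : 1 < β) (p q : ℝ) (hp : 0 ≤ p) (hq : 0 ≤ q) :
    0 ≤ divDiff β p q := by
  rw [divDiff_eq_integral β hβ p q hp hq]
  refine mul_nonneg (by linarith) ?_
  exact intervalIntegral.integral_nonneg zero_le_one
    (fun t ht => Real.rpow_nonneg (base_nonneg hp hq ht) _)

lemma divDiff_comm (β p q : ℝ) : divDiff β p q = divDiff β q p := by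
  rcases eq_or_ne p q with h | h
  · rw [h]
  · rw [divDiff, divDiff, if_neg h, if_neg (Ne.symm h), ← neg_div_neg_eq]
    ring_nf

lemma rpow_helper {x : ℝ} (hx : 0 < x) (α : ℝ) : x ^ (2*α-1) * x = x ^ α * x ^ α := by
  rw [← Real.rpow_add hx α α]
  have h : x ^ (2*α-1) * x = x ^ (2*α-1) * x ^ (1:ℝ) := by rw [Real.rpow_one]
  rw [h, ← Real.rpow_add hx]
  congr 1
  ring

lemma key_amgm {α x y : ℝ} (hα : 1 < α) (hy : 0 < y) (hxy : y < x) :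
    (x ^ (2*α-1) - y ^ (2*α-1)) * (x - y) ≤ (x ^ α - y ^ α) ^ 2 := by
  have hx : (0:ℝ) < x := lt_trans hy hxy
  have e1 := rpow_helper hx α
  have e2 := rpow_helper hy α
  -- 2 x^α y^α ≤ x^(2α-1) y + x y^(2α-1)
  have h1 : Real.sqrt (x ^ (2*α-1) * y) * Real.sqrt (x * y ^ (2*α-1)) = x ^ α * y ^ α := by
    rw [← Real.sqrt_mul (by positivity)]
    have : x ^ (2*α-1) * y * (x * y ^ (2*α-1)) = (x ^ α * y ^ α) ^ 2 := by
      nlinarith [e1, e2]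
    rw [this, Real.sqrt_sq (by positivity)]
  have h2 : 2 * (x ^ α * y ^ α) ≤ x ^ (2*α-1) * y + x * y ^ (2*α-1) := by
    nlinarith [sq_nonneg (Real.sqrt (x ^ (2*α-1) * y) - Real.sqrt (x * y ^ (2*α-1))),
      Real.sq_sqrt (show (0:ℝ) ≤ x ^ (2*α-1) * y by positivity),
      Real.sq_sqrt (show (0:ℝ) ≤ x * y ^ (2*α-1) by positivity), h1]
  nlinarith [e1, e2, h2]

lemma step1_aux {α x y : ℝ} (hα : 1 < α) (hy : 0 ≤ y) (hxy : y < x) :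
    divDiff (2*α-1) x y ≤ (divDiff α x y) ^ 2 := by
  have hx : (0:ℝ) < x := lt_of_le_of_lt hy hxy
  have hne : x ≠ y := ne_of_gt hxy
  rw [divDiff, divDiff, if_neg hne, if_neg hne, div_pow]
  rw [div_le_div_iff₀ (by linarith) (pow_pos (sub_pos.mpr hxy) 2)]
  have key : (x ^ (2*α-1) - y ^ (2*α-1)) * (x - y) ≤ (x ^ α - y ^ α) ^ 2 := by
    rcases eq_or_lt_of_le hy with h0 | h0
    · subst h0
      rw [Real.zero_rpow (by linarith), Real.zero_rpow (by norm_num; linarith)]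
      nlinarith [rpow_helper hx α]
    · exact key_amgm hα h0 hxy
  nlinarith [key, sub_pos.mpr hxy]

lemma step1 {α : ℝ} (hα : 1 < α) {x y : ℝ} (hx : 0 ≤ x) (hy : 0 ≤ y) :
    divDiff (2*α-1) x y ≤ (divDiff α x y) ^ 2 := by
  rcases lt_trichotomy x y with h | h | h
  · rw [divDiff_comm (2*α-1), divDiff_comm α]
    exact step1_aux hα hx h
  · subst h
    rw [divDiff, divDiff, if_pos rfl, if_pos rfl, mul_pow]
    rcases eq_or_lt_of_le hx with h0 | h0
    · subst h0
      rw [Real.zero_rpow (by norm_num; linarith), Real.zero_rpow (by linarith)]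
      norm_num
    · have e : (x ^ (α-1)) ^ 2 = x ^ (2*α-1-1) := by
        rw [← Real.rpow_natCast (x ^ (α-1)) 2, ← Real.rpow_mul (le_of_lt h0)]
        norm_num
        ring_nf
      rw [e]
      have : (0:ℝ) < x ^ (2*α-1-1) := Real.rpow_pos_of_pos h0 _
      nlinarith [sq_nonneg (α - 1)]
  · exact step1_aux hα hy h

lemma integral_cauchy_schwarz (f g : ℝ → ℝ) (hf : Continuous f) (hg : Continuous g) :
    ∫ t in (0:ℝ)..1, f t * g t ≤
      Real.sqrt ((∫ t in (0:ℝ)..1, f t ^ 2) * (∫ t in (0:ℝ)..1, g t ^ 2)) := by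
  set A := ∫ t in (0:ℝ)..1, f t ^ 2 with hA'
  set B := ∫ t in (0:ℝ)..1, f t * g t with hB'
  set C := ∫ t in (0:ℝ)..1, g t ^ 2 with hC'
  have hfi : IntervalIntegrable (fun t => f t ^ 2) MeasureTheory.volume 0 1 :=
    (hf.pow 2).intervalIntegrable 0 1
  have hgi : IntervalIntegrable (fun t => g t ^ 2) MeasureTheory.volume 0 1 :=
    (hg.pow 2).intervalIntegrable 0 1
  have hfgi : IntervalIntegrable (fun t => f t * g t) MeasureTheory.volume 0 1 :=
    (hf.mul hg).intervalIntegrable 0 1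
  have key : ∀ lam : ℝ, 0 ≤ C * (lam * lam) + (-2 * B) * lam + A := by
    intro lam
    have h0 : 0 ≤ ∫ t in (0:ℝ)..1, (f t - lam * g t) ^ 2 :=
      intervalIntegral.integral_nonneg zero_le_one (fun t _ => sq_nonneg _)
    have heq : (∫ t in (0:ℝ)..1, (f t - lam * g t) ^ 2)
        = A - 2 * lam * B + lam ^ 2 * C := by
      have hpt : ∀ t : ℝ, (f t - lam * g t) ^ 2
          = f t ^ 2 - (2 * lam) * (f t * g t) + lam ^ 2 * g t ^ 2 := fun t => by ring
      simp_rw [hpt]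
      rw [intervalIntegral.integral_add ((hfi.sub (hfgi.const_mul _)))
          (hgi.const_mul _),
        intervalIntegral.integral_sub hfi (hfgi.const_mul _),
        intervalIntegral.integral_const_mul, intervalIntegral.integral_const_mul]
    nlinarith [h0, heq]
  have hd := discrim_le_zero key
  rw [discrim] at hd
  have hB2 : B ^ 2 ≤ A * C := by nlinarith [hd]
  calc B ≤ |B| := le_abs_self B
    _ = Real.sqrt (B ^ 2) := (Real.sqrt_sq_eq_abs B).symm
    _ ≤ Real.sqrt (A * C) := Real.sqrt_le_sqrt hB2

set_option maxHeartbeats 1600000 in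
lemma step2 {α a b c d : ℝ} (hα : 1 < α) (ha : 0 ≤ a) (hb : 0 ≤ b) (hc : 0 ≤ c) (hd : 0 ≤ d) :
    divDiff (2*α-1) (Real.sqrt (a*c)) (Real.sqrt (b*d)) ≤
      Real.sqrt (divDiff (2*α-1) a b * divDiff (2*α-1) c d) := by
  have hβ : 1 < 2*α-1 := by linarith
  have hβ0 : (0:ℝ) ≤ 2*α-1 := by linarith
  set u := Real.sqrt (a*c) with hu'
  set v := Real.sqrt (b*d) with hv'
  have hu : 0 ≤ u := Real.sqrt_nonneg _
  have hv : 0 ≤ v := Real.sqrt_nonneg _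
  have hu2 : u ^ 2 = a * c := Real.sq_sqrt (mul_nonneg ha hc)
  have hv2 : v ^ 2 = b * d := Real.sq_sqrt (mul_nonneg hb hd)
  rw [divDiff_eq_integral _ hβ u v hu hv, divDiff_eq_integral _ hβ a b ha hb,
    divDiff_eq_integral _ hβ c d hc hd]
  set f : ℝ → ℝ := fun t => ((a-b)*t+b) ^ (α-1) with hf'
  set g : ℝ → ℝ := fun t => ((c-d)*t+d) ^ (α-1) with hg'
  have hrc : Continuous fun x : ℝ => x ^ (α-1) := Real.continuous_rpow_const (by linarith)
  have hrc2 : Continuous fun x : ℝ => x ^ (2*α-1-1) := Real.continuous_rpow_const (by linarith)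
  have hf : Continuous f := hrc.comp (by continuity)
  have hg : Continuous g := hrc.comp (by continuity)
  -- pointwise bound
  have hpt : ∀ t ∈ Set.Icc (0:ℝ) 1, ((u-v)*t+v) ^ (2*α-1-1) ≤ f t * g t := by
    intro t ht
    have hX : 0 ≤ (a-b)*t+b := base_nonneg ha hb ht
    have hY : 0 ≤ (c-d)*t+d := base_nonneg hc hd ht
    have hZ : 0 ≤ (u-v)*t+v := base_nonneg hu hv ht
    have huv : 2 * (u * v) ≤ a*d + b*c := by
      have e : u * v = Real.sqrt (a*d) * Real.sqrt (b*c) := by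
        rw [hu', hv', ← Real.sqrt_mul (mul_nonneg ha hc), ← Real.sqrt_mul (mul_nonneg ha hd)]
        ring_nf
      rw [e]
      nlinarith [sq_nonneg (Real.sqrt (a*d) - Real.sqrt (b*c)),
        Real.sq_sqrt (mul_nonneg ha hd), Real.sq_sqrt (mul_nonneg hb hc)]
    have hZ2 : ((u-v)*t+v) ^ 2 ≤ ((a-b)*t+b) * ((c-d)*t+d) := by
      obtain ⟨ht0, ht1⟩ := ht
      nlinarith [mul_nonneg ht0 (by linarith : (0:ℝ) ≤ 1 - t), hu2, hv2, huv]
    have e1 : ((u-v)*t+v) ^ (2*α-1-1) = (((u-v)*t+v) ^ 2) ^ (α-1) := by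
      rw [← Real.rpow_natCast ((u-v)*t+v) 2, ← Real.rpow_mul hZ]
      congr 1
      push_cast
      ring
    rw [e1]
    calc (((u-v)*t+v) ^ 2) ^ (α-1) ≤ (((a-b)*t+b) * ((c-d)*t+d)) ^ (α-1) :=
          Real.rpow_le_rpow (sq_nonneg _) hZ2 (by linarith)
      _ = f t * g t := Real.mul_rpow hX hY
  have hsq : ∀ (p q : ℝ), 0 ≤ p → 0 ≤ q →
      ∀ t ∈ Set.uIcc (0:ℝ) 1, (((p-q)*t+q) ^ (α-1)) ^ 2 = ((p-q)*t+q) ^ (2*α-1-1) := by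
    intro p q hp hq t ht
    rw [Set.uIcc_of_le zero_le_one] at ht
    have hX : 0 ≤ (p-q)*t+q := base_nonneg hp hq ht
    rw [← Real.rpow_natCast (((p-q)*t+q) ^ (α-1)) 2, ← Real.rpow_mul hX]
    congr 1
    push_cast
    ring
  have hmono : (∫ t in (0:ℝ)..1, ((u-v)*t+v) ^ (2*α-1-1)) ≤ ∫ t in (0:ℝ)..1, f t * g t :=
    intervalIntegral.integral_mono_on zero_le_one
      ((hrc2.comp (by continuity)).intervalIntegrable 0 1)
      ((hf.mul hg).intervalIntegrable 0 1) hpt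
  have hcs := integral_cauchy_schwarz f g hf hg
  have hfsq : (∫ t in (0:ℝ)..1, f t ^ 2) = ∫ t in (0:ℝ)..1, ((a-b)*t+b) ^ (2*α-1-1) :=
    intervalIntegral.integral_congr (fun t ht => hsq a b ha hb t ht)
  have hgsq : (∫ t in (0:ℝ)..1, g t ^ 2) = ∫ t in (0:ℝ)..1, ((c-d)*t+d) ^ (2*α-1-1) :=
    intervalIntegral.integral_congr (fun t ht => hsq c d hc hd t ht)
  set P := ∫ t in (0:ℝ)..1, ((a-b)*t+b) ^ (2*α-1-1) with hP'
  set Q := ∫ t in (0:ℝ)..1, ((c-d)*t+d) ^ (2*α-1-1) with hQ'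
  rw [hfsq, hgsq] at hcs
  have : (2*α-1) * ∫ t in (0:ℝ)..1, ((u-v)*t+v) ^ (2*α-1-1) ≤ (2*α-1) * Real.sqrt (P * Q) :=
    mul_le_mul_of_nonneg_left (le_trans hmono hcs) hβ0
  refine le_trans this (le_of_eq ?_)
  rw [show (2*α-1) * P * ((2*α-1) * Q) = (2*α-1)^2 * (P * Q) by ring,
    Real.sqrt_mul (sq_nonneg _), Real.sqrt_sq hβ0]

lemma Fminus_eq_divDiff {α : ℝ} (hα : 1 < α) {r s : ℝ} (hr : 0 ≤ r) (hs : 0 ≤ s) :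
    Fminus α r s = divDiff (2*α-1) (Real.sqrt r) (Real.sqrt s) := by
  have hhalf : ∀ x : ℝ, 0 ≤ x → (Real.sqrt x) ^ (2*α-1) = x ^ (α - 1/2) := by
    intro x hx
    rw [Real.sqrt_eq_rpow, ← Real.rpow_mul hx]
    congr 1
    ring
  rcases eq_or_ne r s with h | h
  · subst h
    rw [Fminus, if_pos rfl, divDiff, if_pos rfl]
    congr 1
    rw [Real.sqrt_eq_rpow, ← Real.rpow_mul hr]
    congr 1
    ring
  · have hne : Real.sqrt r ≠ Real.sqrt s := by
      intro heq
      apply h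
      rw [← Real.sq_sqrt hr, ← Real.sq_sqrt hs, heq]
    rw [Fminus, if_neg h, divDiff, if_neg hne, hhalf r hr, hhalf s hs,
      Real.sqrt_eq_rpow, Real.sqrt_eq_rpow]

lemma Fplus_le_Fminus_aux {α : ℝ} (hα : 1 < α) {r s : ℝ} (hs : 0 ≤ s) (hrs : s < r) :
    Fplus α r s ≤ Fminus α r s := by
  have hr : 0 < r := lt_of_le_of_lt hs hrs
  have hrh : 0 < r ^ ((1:ℝ)/2) := Real.rpow_pos_of_pos hr _
  have hsh : 0 ≤ s ^ ((1:ℝ)/2) := Real.rpow_nonneg hs _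
  have hlt : s ^ ((1:ℝ)/2) < r ^ ((1:ℝ)/2) := Real.rpow_lt_rpow hs hrs (by norm_num)
  have key : s ^ (α - 1/2) * r ^ ((1:ℝ)/2) ≤ r ^ (α - 1/2) * s ^ ((1:ℝ)/2) := by
    rcases eq_or_lt_of_le hs with h0 | h0
    · rw [← h0, Real.zero_rpow (by intro hh; norm_num at hh; linarith), zero_mul,
        Real.zero_rpow (by norm_num)]
      positivity
    · have es : s ^ (α - 1/2) = s ^ (α - 1) * s ^ ((1:ℝ)/2) := by
        rw [← Real.rpow_add h0]; congr 1; ring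
      have er : r ^ (α - 1/2) = r ^ (α - 1) * r ^ ((1:ℝ)/2) := by
        rw [← Real.rpow_add hr]; congr 1; ring
      have hmono : s ^ (α - 1) ≤ r ^ (α - 1) :=
        Real.rpow_le_rpow (le_of_lt h0) (le_of_lt hrs) (by linarith)
      rw [es, er]
      have h1 : 0 ≤ s ^ ((1:ℝ)/2) * r ^ ((1:ℝ)/2) := by positivity
      nlinarith [mul_le_mul_of_nonneg_right hmono h1]
  rw [Fplus, if_neg (by intro hh; exact absurd hh.1 (ne_of_gt hr)), Fminus,
    if_neg (ne_of_lt hrs).symm]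
  rw [div_le_div_iff₀ (by linarith) (by linarith)]
  nlinarith [key]

lemma Fminus_comm (α r s : ℝ) : Fminus α r s = Fminus α s r := by
  rcases eq_or_ne r s with h | h
  · rw [h]
  · rw [Fminus, Fminus, if_neg h, if_neg (Ne.symm h), ← neg_div_neg_eq]
    ring_nf

lemma Fplus_comm (α r s : ℝ) : Fplus α r s = Fplus α s r := by
  by_cases h : r = 0 ∧ s = 0
  · rw [Fplus, Fplus, if_pos h, if_pos ⟨h.2, h.1⟩]
  · rw [Fplus, Fplus, if_neg h, if_neg (fun hh => h ⟨hh.2, hh.1⟩)]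
    ring_nf

lemma Fplus_le_Fminus {α : ℝ} (hα : 1 < α) {r s : ℝ} (hr : 0 ≤ r) (hs : 0 ≤ s) :
    Fplus α r s ≤ Fminus α r s := by
  rcases lt_trichotomy r s with h | h | h
  · rw [Fplus_comm, Fminus_comm]
    exact Fplus_le_Fminus_aux hα hr h
  · subst h
    rcases eq_or_lt_of_le hr with h0 | h0
    · rw [Fplus, if_pos ⟨h0.symm, h0.symm⟩, Fminus, if_pos rfl, ← h0,
        Real.zero_rpow (by intro hh; linarith), mul_zero]
    · rw [Fplus, if_neg (by intro hh; exact absurd hh.1 (ne_of_gt h0)), Fminus, if_pos rfl]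
      have e : r ^ (α - 1/2) + r ^ (α - 1/2) = (r ^ (α-1) * (2 * r ^ ((1:ℝ)/2))) := by
        have : r ^ (α - 1/2) = r ^ (α - 1) * r ^ ((1:ℝ)/2) := by
          rw [← Real.rpow_add h0]; congr 1; ring
        rw [this]; ring
      have hrh : 0 < r ^ ((1:ℝ)/2) := Real.rpow_pos_of_pos h0 _
      rw [e]
      rw [div_le_iff₀ (by linarith)]
      have h1 : 0 ≤ r ^ (α-1) := Real.rpow_nonneg hr _
      have h2 : 0 ≤ (2*α-2) * (r ^ (α-1) * r ^ ((1:ℝ)/2)) :=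
        mul_nonneg (by linarith) (mul_nonneg h1 (le_of_lt hrh))
      nlinarith [h2]
  · exact Fplus_le_Fminus_aux hα hs h

/-- **componentwise form of Lemma 4 of the paper.** For `α > 1` and
`a, b, c, d ≥ 0`: `F⁻(ac, bd) ≤ D_α(a,b)·D_α(c,d)` and `F⁺(ac, bd) ≤ D_α(a,b)·D_α(c,d)`. -/
theorem componentwise_lemma4 (α : ℝ) (hα : 1 < α) (a b c d : ℝ)
    (ha : 0 ≤ a) (hb : 0 ≤ b) (hc : 0 ≤ c) (hd : 0 ≤ d) :
    Fminus α (a * c) (b * d) ≤ divDiff α a b * divDiff α c d ∧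
    Fplus α (a * c) (b * d) ≤ divDiff α a b * divDiff α c d := by
  have hβ : 1 < 2*α-1 := by linarith
  have hDa : 0 ≤ divDiff α a b := divDiff_nonneg α hα a b ha hb
  have hDc : 0 ≤ divDiff α c d := divDiff_nonneg α hα c d hc hd
  have h1 : Fminus α (a * c) (b * d) ≤ divDiff α a b * divDiff α c d := by
    rw [Fminus_eq_divDiff hα (mul_nonneg ha hc) (mul_nonneg hb hd)]
    calc divDiff (2*α-1) (Real.sqrt (a*c)) (Real.sqrt (b*d))
        ≤ Real.sqrt (divDiff (2*α-1) a b * divDiff (2*α-1) c d) := step2 hα ha hb hc hd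
      _ ≤ Real.sqrt ((divDiff α a b)^2 * (divDiff α c d)^2) :=
          Real.sqrt_le_sqrt (mul_le_mul (step1 hα ha hb) (step1 hα hc hd)
            (divDiff_nonneg (2*α-1) hβ c d hc hd) (sq_nonneg _))
      _ = divDiff α a b * divDiff α c d := by
          rw [← mul_pow, Real.sqrt_sq (mul_nonneg hDa hDc)]
  exact ⟨h1, le_trans (Fplus_le_Fminus hα (mul_nonneg ha hc) (mul_nonneg hb hd)) h1⟩
end

section
/- Let β ≥ 1 be real and let r ≥ s ≥ 0. Then (r^β − s^β)(r + s) ≥ (r^β + s^β)(r − s) ≥ 0. Equivalently, in divided-difference form, for r ≠ s one has (r^β − s^β)/(r − s) ≥ (r^β + s^β)/(r + s) ≥ 0. -/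
/-- **Lemma 6 of the paper.** For real `β ≥ 1` and `r ≥ s ≥ 0`:
`(r^β − s^β)(r + s) ≥ (r^β + s^β)(r − s) ≥ 0`; equivalently, in divided-difference
form, for `r ≠ s` one has `(r^β − s^β)/(r − s) ≥ (r^β + s^β)/(r + s) ≥ 0`. -/
theorem diff_quotient_ineq (β : ℝ) (hβ : 1 ≤ β) (r s : ℝ) (hs : 0 ≤ s) (hsr : s ≤ r) :
    ((r ^ β - s ^ β) * (r + s) ≥ (r ^ β + s ^ β) * (r - s) ∧
      (r ^ β + s ^ β) * (r - s) ≥ 0) ∧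
    (r ≠ s →
      (r ^ β - s ^ β) / (r - s) ≥ (r ^ β + s ^ β) / (r + s) ∧
      (r ^ β + s ^ β) / (r + s) ≥ 0) := by
  have hr : 0 ≤ r := hs.trans hsr
  have hkey : s * r ^ β - r * s ^ β ≥ 0 := by
    rcases eq_or_lt_of_le hs with h0 | hs0
    · simp [← h0, Real.zero_rpow (by linarith : β ≠ 0)]
    · have hr0 : 0 < r := lt_of_lt_of_le hs0 hsr
      have h1 : s ^ (β - 1) ≤ r ^ (β - 1) :=
        Real.rpow_le_rpow hs hsr (by linarith)
      have h2 : s * r * s ^ (β - 1) ≤ s * r * r ^ (β - 1) := by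
        apply mul_le_mul_of_nonneg_left h1 (by positivity)
      have hrs : r ^ (β - 1) * r = r ^ β := by
        rw [← Real.rpow_add_one hr0.ne' (β - 1)]; ring_nf
      have hss : s ^ (β - 1) * s = s ^ β := by
        rw [← Real.rpow_add_one hs0.ne' (β - 1)]; ring_nf
      nlinarith [h2, hrs, hss]
  have hnn : 0 ≤ r ^ β + s ^ β := by positivity
  have h2 : (r ^ β + s ^ β) * (r - s) ≥ 0 := mul_nonneg hnn (by linarith)
  refine ⟨⟨by nlinarith, h2⟩, fun hne => ?_⟩
  have hrs : s < r := lt_of_le_of_ne hsr (fun h => hne h.symm)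
  have hp1 : 0 < r - s := by linarith
  have hp2 : 0 < r + s := by linarith
  constructor
  · rw [ge_iff_le, div_le_div_iff₀ hp2 hp1]
    nlinarith
  · positivity
end

section
/- Let α ≥ 1 be real. The function h : (0,∞) → ℝ defined by h(ξ) = log(e^{αξ} − 1) − log(e^{ξ} − 1) is convex on (0,∞). -/
/-!
Write `h(ξ) = L(αξ) - L(ξ)` with `L(t) = log (eᵗ - 1)`. Then `L'' = -G` with
`G(t) = eᵗ / (eᵗ - 1)² = 1 / (4 sinh² (t / 2))`, so `h''(ξ) = G(ξ) - α² G(αξ)`, which is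
nonnegative because `α sinh u ≤ sinh (αu)` for `u ≥ 0`: compare the power series of `sinh`
term by term.
-/

open Real Set

theorem HasDerivAt.comp_mul_left {𝕜 F : Type*} [NontriviallyNormedField 𝕜]
    [NormedAddCommGroup F] [NormedSpace 𝕜 F] {f : 𝕜 → F} {f' : F} {a x : 𝕜}
    (hf : HasDerivAt f f' (a * x)) : HasDerivAt (fun x => f (a * x)) (a • f') x := by
  simpa [Function.comp_def] using hf.scomp x ((hasDerivAt_id x).const_mul a)

namespace Real

lemma mul_sinh_le_sinh_mul {a u : ℝ} (ha : 1 ≤ a) (hu : 0 ≤ u) :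
    a * sinh u ≤ sinh (a * u) := by
  refine hasSum_le (fun n => ?_) ((hasSum_sinh u).mul_left a) (hasSum_sinh (a * u))
  rw [← mul_div_assoc, mul_pow]
  gcongr
  exact le_self_pow₀ ha (Nat.succ_ne_zero _)

lemma exp_sub_one_ne_zero {t : ℝ} (ht : t ≠ 0) : exp t - 1 ≠ 0 :=
  sub_ne_zero.2 (mt (exp_eq_one_iff t).1 ht)

lemma exp_sub_one_eq (t : ℝ) : exp t - 1 = 2 * exp (t / 2) * sinh (t / 2) := by
  have hsq : exp (t / 2) * exp (t / 2) = exp t := by rw [← exp_add, add_halves]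
  have hinv : exp (t / 2) * exp (-(t / 2)) = 1 := by rw [← exp_add, add_neg_cancel, exp_zero]
  rw [sinh_eq]
  linear_combination hinv - hsq

lemma exp_div_exp_sub_one_sq (t : ℝ) :
    exp t / (exp t - 1) ^ 2 = (4 * sinh (t / 2) ^ 2)⁻¹ := by
  have hsq : exp (t / 2) ^ 2 = exp t := by rw [sq, ← exp_add, add_halves]
  rw [exp_sub_one_eq, mul_pow, mul_pow, hsq, mul_comm (2 ^ 2 : ℝ), mul_assoc,
    div_mul_cancel_left₀ (exp_ne_zero t)]
  norm_num

lemma sq_mul_exp_div_exp_sub_one_sq_le {a t : ℝ} (ha : 1 ≤ a) (ht : 0 < t) :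
    a ^ 2 * (exp (a * t) / (exp (a * t) - 1) ^ 2) ≤ exp t / (exp t - 1) ^ 2 := by
  have hs : 0 < sinh (t / 2) := sinh_pos_iff.2 (half_pos ht)
  have key : a ^ 2 * sinh (t / 2) ^ 2 ≤ sinh (a * t / 2) ^ 2 := by
    rw [← mul_pow, mul_div_assoc]
    exact pow_le_pow_left₀ (by positivity) (mul_sinh_le_sinh_mul ha (half_pos ht).le) 2
  rw [exp_div_exp_sub_one_sq, exp_div_exp_sub_one_sq, ← div_eq_mul_inv,
    div_le_iff₀ (by positivity), inv_mul_eq_div, le_div_iff₀ (by positivity)]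
  linarith

lemma hasDerivAt_log_exp_sub_one {t : ℝ} (ht : t ≠ 0) :
    HasDerivAt (fun t => log (exp t - 1)) (exp t / (exp t - 1)) t :=
  ((hasDerivAt_exp t).sub_const 1).log (exp_sub_one_ne_zero ht)

lemma hasDerivAt_exp_div_exp_sub_one {t : ℝ} (ht : t ≠ 0) :
    HasDerivAt (fun t => exp t / (exp t - 1)) (-(exp t / (exp t - 1) ^ 2)) t :=
  ((hasDerivAt_exp t).div ((hasDerivAt_exp t).sub_const 1)
    (exp_sub_one_ne_zero ht)).congr_deriv (by ring)

end Real

/-- For real `α ≥ 1`, the function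
`h(ξ) = log(e^{αξ} − 1) − log(e^{ξ} − 1)` is convex on `(0, ∞)`. -/
theorem log_ratio_convex (α : ℝ) (hα : 1 ≤ α) :
    ConvexOn ℝ (Set.Ioi (0 : ℝ))
      (fun ξ => Real.log (Real.exp (α * ξ) - 1) - Real.log (Real.exp ξ - 1)) := by
  have hαξ {ξ : ℝ} (hξ : ξ ∈ Ioi 0) : α * ξ ≠ 0 :=
    (mul_pos (one_pos.trans_le hα) hξ).ne'
  have hderiv {ξ : ℝ} (hξ : ξ ∈ Ioi 0) :
      HasDerivAt (fun x => log (exp (α * x) - 1) - log (exp x - 1))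
        (α * (exp (α * ξ) / (exp (α * ξ) - 1)) - exp ξ / (exp ξ - 1)) ξ :=
    (hasDerivAt_log_exp_sub_one (hαξ hξ)).comp_mul_left.sub
      (hasDerivAt_log_exp_sub_one (ne_of_gt hξ))
  have hderiv2 {ξ : ℝ} (hξ : ξ ∈ Ioi 0) :
      HasDerivAt (fun x => α * (exp (α * x) / (exp (α * x) - 1)) - exp x / (exp x - 1))
        (exp ξ / (exp ξ - 1) ^ 2 - α ^ 2 * (exp (α * ξ) / (exp (α * ξ) - 1) ^ 2)) ξ :=
    (((hasDerivAt_exp_div_exp_sub_one (hαξ hξ)).comp_mul_left.const_mul α).sub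
      (hasDerivAt_exp_div_exp_sub_one (ne_of_gt hξ))).congr_deriv
      (by simp only [smul_eq_mul]; ring)
  exact convexOn_of_hasDerivWithinAt2_nonneg (convex_Ioi 0)
    (fun ξ hξ => (hderiv hξ).continuousAt.continuousWithinAt)
    (fun ξ hξ => (hderiv (interior_subset hξ)).hasDerivWithinAt)
    (fun ξ hξ => (hderiv2 (interior_subset hξ)).hasDerivWithinAt)
    (fun ξ hξ => sub_nonneg.2 (sq_mul_exp_div_exp_sub_one_sq_le hα (interior_subset hξ)))
end

section
/- Fix a real ξ > 0. The function υ(·, ξ) : (0,∞) → ℝ defined by υ(α, ξ) = α² e^{αξ} / (e^{αξ} − 1)² is strictly decreasing in α on (0,∞). -/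
/-!
With `t = αξ` one has `υ(α, ξ) = ξ⁻² ((sinh (t/2) / (t/2))²)⁻¹`, and `sinh x / x` is the slope of
the chord from the origin of `sinh`, which is strictly convex on `[0, ∞)`; so it strictly increases.
-/

open Real Set

lemma Real.strictConvexOn_sinh_Ici : StrictConvexOn ℝ (Ici 0) sinh :=
  StrictMonoOn.strictConvexOn_of_deriv (convex_Ici 0) continuous_sinh.continuousOn
    (by rw [deriv_sinh, interior_Ici]; exact cosh_strictMonoOn.mono Ioi_subset_Ici_self)

lemma Real.strictMonoOn_sinh_div_self : StrictMonoOn (fun x => sinh x / x) (Ioi 0) := by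
  intro x hx y hy hxy
  simpa using strictConvexOn_sinh_Ici.secant_strict_mono self_mem_Ici
    (Ioi_subset_Ici_self hx) (Ioi_subset_Ici_self hy) hx.out.ne' hy.out.ne' hxy

lemma Real.sq_mul_exp_div_sq_exp_sub_one (t : ℝ) :
    t ^ 2 * exp t / (exp t - 1) ^ 2 = ((sinh (t / 2) / (t / 2)) ^ 2)⁻¹ := by
  rcases eq_or_ne t 0 with rfl | ht
  · simp
  have hexp : exp t = exp (t / 2) ^ 2 := by rw [← exp_nat_mul]; ring_nf
  have hsinh : sinh (t / 2) = (exp (t / 2) ^ 2 - 1) / (2 * exp (t / 2)) := by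
    rw [sinh_eq, exp_neg]; field_simp
  have hne : exp (t / 2) ^ 2 - 1 ≠ 0 := by
    rw [← hexp, sub_ne_zero]; exact fun h => ht (exp_eq_one_iff t |>.1 h)
  rw [hsinh, hexp]
  field_simp

lemma Real.strictAntiOn_sq_mul_exp_div_sq_exp_sub_one :
    StrictAntiOn (fun t : ℝ => t ^ 2 * exp t / (exp t - 1) ^ 2) (Ioi 0) := by
  intro s hs t ht hst
  simp only [sq_mul_exp_div_sq_exp_sub_one]
  have hs2 : 0 < s / 2 := half_pos hs
  gcongr (?_ ^ 2)⁻¹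
  exact strictMonoOn_sinh_div_self hs2 (half_pos ht.out) (by linarith)

/-- For fixed `ξ > 0`, the function
`α ↦ υ(α, ξ) = α² e^{αξ} / (e^{αξ} − 1)²` is strictly decreasing on `(0, ∞)`. -/
theorem upsilon_strictAntiOn (ξ : ℝ) (hξ : 0 < ξ) :
    StrictAntiOn (fun α : ℝ => α ^ 2 * Real.exp (α * ξ) / (Real.exp (α * ξ) - 1) ^ 2)
      (Set.Ioi (0 : ℝ)) := by
  have hscale : ∀ α, α ^ 2 * exp (α * ξ) / (exp (α * ξ) - 1) ^ 2
      = (α * ξ) ^ 2 * exp (α * ξ) / (exp (α * ξ) - 1) ^ 2 / ξ ^ 2 := fun α => by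
    field_simp
  intro a ha b hb hab
  simp only [hscale]
  gcongr ?_ / _
  exact strictAntiOn_sq_mul_exp_div_sq_exp_sub_one (mul_pos ha hξ) (mul_pos hb hξ)
    (mul_lt_mul_of_pos_right hab hξ)
end
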